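/- Let B = [b_{ij}] be an n×n real constant row-sum matrix with Be = λ_t e. Then τ_1(B) = (1/2) · max_{1≤i,j≤n} Σ_{k=1}^{n} |b_{ik} − b_{jk}|, and this quantity also equals λ_t − min_{1≤i,j≤n} Σ_{k=1}^{n} min{b_{ik}, b_{jk}}. -/

import Mathlib

open Matrix
open scoped ENNReal

/-- Non-increasing (descending) sort of a list of reals. -/
noncomputable def sortDesc (l : List ℝ) : List ℝ := (l.insertionSort (· ≤ ·)).reverse

/-- Given the descending rearrangement `l` of `n` numbers, the sum of the largest
(about) half minus the sum of the smallest (about) half, skipping the middle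
element when `n` is odd. -/
noncomputable def halfSumDiff (n : ℕ) (l : List ℝ) : ℝ :=
  if n % 2 = 1 then (l.take ((n - 1) / 2)).sum - (l.drop ((n + 1) / 2)).sum
  else (l.take (n / 2)).sum - (l.drop (n / 2)).sum

/-- Radius of the `i`-th Gershgorin disc of the second type of `M`, computed from
the `i`-th row of `M` with the diagonal entry replaced by `0`. -/
noncomputable def secondTypeRadius {n : ℕ} (M : Matrix (Fin n) (Fin n) ℝ) (i : Fin n) : ℝ :=
  halfSumDiff n (sortDesc (List.ofFn fun j : Fin n => if j = i then 0 else M i j))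

/-- The `i`-th Gershgorin disc of the second type of `M`. -/
noncomputable def secondTypeDisc {n : ℕ} (M : Matrix (Fin n) (Fin n) ℝ) (i : Fin n) : Set ℂ :=
  Metric.closedBall ((M i i : ℝ) : ℂ) (secondTypeRadius M i)

/-- The Gershgorin region of the second type of `M`. -/
noncomputable def secondTypeRegion {n : ℕ} (M : Matrix (Fin n) (Fin n) ℝ) : Set ℂ :=
  ⋃ i : Fin n, secondTypeDisc M i

/-- `μ` is a (complex) eigenvalue of the real matrix `A`, i.e. a complex root of
its characteristic polynomial. -/
def IsEigenvalueC {n : ℕ} (A : Matrix (Fin n) (Fin n) ℝ) (μ : ℂ) : Prop :=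
  ((A.map ((↑) : ℝ → ℂ)).charpoly).IsRoot μ

/-- The `k`-th largest element (1-indexed) among the `n - 1` off-diagonal entries of
column `j` of `B`. -/
noncomputable def kthLargestOffDiag {n : ℕ} (B : Matrix (Fin n) (Fin n) ℝ) (j : Fin n)
    (k : ℕ) : ℝ :=
  (sortDesc (((List.ofFn fun i : Fin n => B i j).eraseIdx j.val))).getD (k - 1) 0

/-- The ℓ_p norm of a vector in ℝ^n. -/
noncomputable def lpNorm {n : ℕ} (p : ℝ≥0∞) (x : Fin n → ℝ) : ℝ :=
  @norm (PiLp p fun _ : Fin n => ℝ) _ ((WithLp.equiv p (∀ _ : Fin n, ℝ)).symm x)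

/-- The seminorm-like quantity `τ_p(B)`: the supremum of `‖Bᵀ x‖_p` over all real
vectors `x` with `xᵀ e = 0` and `‖x‖_p = 1`. -/
noncomputable def tau {n : ℕ} (p : ℝ≥0∞) (B : Matrix (Fin n) (Fin n) ℝ) : ℝ :=
  sSup { t : ℝ | ∃ x : Fin n → ℝ, (∑ i, x i) = 0 ∧ lpNorm p x = 1 ∧ t = lpNorm p (Bᵀ *ᵥ x) }

/-- The Ostrowski–Brauer set `Γ(M)` of a real square matrix `M`. -/
noncomputable def brauerSet {n : ℕ} (M : Matrix (Fin n) (Fin n) ℝ) : Set ℂ :=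
  ⋃ (i : Fin n) (j : Fin n) (_ : i < j),
    { y : ℂ | ‖y - (M i i : ℝ)‖ * ‖y - (M j j : ℝ)‖ ≤
        (∑ k ∈ Finset.univ.filter fun k => k ≠ i, |M i k|) *
        (∑ k ∈ Finset.univ.filter fun k => k ≠ j, |M j k|) }

/-- `cs_j(A)` from Definition 2.3: sorted column sums difference. -/
noncomputable def csCol {n : ℕ} (A : Matrix (Fin n) (Fin n) ℝ) (j : Fin n) : ℝ :=
  halfSumDiff n (sortDesc (List.ofFn fun i : Fin n => A i j))

/-! Write a zero-sum vector `x` with `‖x‖₁ = 1` as `x = p - q` with `p, q ≥ 0` its positive and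
negative parts, so that `∑ p = ∑ q = 1/2`. Then `Bᵀ x = ∑ᵢ xᵢ Bᵢ = 2 ∑ᵢⱼ pᵢ qⱼ (Bᵢ - Bⱼ)`, whence
`‖Bᵀ x‖₁ ≤ ½ maxᵢⱼ ‖Bᵢ - Bⱼ‖₁`, and `x = (eᵢ - eⱼ)/2` attains this bound. The second formula is
`|a - b| = a + b - 2 min a b` summed along two rows, both of which sum to `λ`. -/

open Finset

section Transport

variable {ι E : Type*} [Fintype ι] [SeminormedAddCommGroup E] [NormedSpace ℝ E]

theorem sum_sum_mul_smul_sub (p q : ι → ℝ) (v : ι → E) :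
    ∑ i, ∑ j, (p i * q j) • (v i - v j) =
      (∑ j, q j) • ∑ i, p i • v i - (∑ i, p i) • ∑ j, q j • v j := by
  simp only [smul_sub, sum_sub_distrib, sum_smul, smul_sum, mul_smul]
  rw [sum_comm (f := fun i j => p i • q j • v j)]
  simp only [smul_comm (p _) (q _)]

theorem norm_sum_smul_sub_sum_smul_le {p q : ι → ℝ} (hp : 0 ≤ p) (hq : 0 ≤ q)
    (hpq : ∑ i, p i = ∑ i, q i) (v : ι → E) {D : ℝ} (hD : ∀ i j, ‖v i - v j‖ ≤ D) :
    ‖∑ i, p i • v i - ∑ i, q i • v i‖ ≤ (∑ i, p i) * D := by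
  rcases (sum_nonneg fun i _ => hp i : 0 ≤ ∑ i, p i).eq_or_lt with hs0 | hs0
  · have hp0 : ∀ i, p i = 0 := fun i =>
      (sum_eq_zero_iff_of_nonneg fun i _ => hp i).1 hs0.symm i (mem_univ i)
    have hq0 : ∀ i, q i = 0 := fun i =>
      (sum_eq_zero_iff_of_nonneg fun i _ => hq i).1 (hpq ▸ hs0.symm) i (mem_univ i)
    simp [hp0, hq0]
  set s := ∑ i, p i
  have key : s • (∑ i, p i • v i - ∑ i, q i • v i) = ∑ i, ∑ j, (p i * q j) • (v i - v j) := by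
    rw [sum_sum_mul_smul_sub, ← hpq, smul_sub]
  have hbound : s * ‖∑ i, p i • v i - ∑ i, q i • v i‖ ≤ s * (s * D) := calc
    s * ‖∑ i, p i • v i - ∑ i, q i • v i‖ = ‖∑ i, ∑ j, (p i * q j) • (v i - v j)‖ := by
      rw [← key, norm_smul, Real.norm_of_nonneg hs0.le]
    _ ≤ ∑ i, ∑ j, p i * q j * D := by
      refine (norm_sum_le _ _).trans (sum_le_sum fun i _ => (norm_sum_le _ _).trans ?_)
      refine sum_le_sum fun j _ => ?_
      rw [norm_smul, Real.norm_of_nonneg (mul_nonneg (hp i) (hq j))]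
      exact mul_le_mul_of_nonneg_left (hD i j) (mul_nonneg (hp i) (hq j))
    _ = s * (s * D) := by
      simp only [mul_assoc, ← mul_sum, ← sum_mul, ← hpq, s]
  exact le_of_mul_le_mul_left hbound hs0

theorem norm_sum_smul_le_of_sum_eq_zero {x : ι → ℝ} (hx : ∑ i, x i = 0) (v : ι → E) {D : ℝ}
    (hD : ∀ i j, ‖v i - v j‖ ≤ D) : ‖∑ i, x i • v i‖ ≤ (∑ i, |x i|) / 2 * D := by
  set p : ι → ℝ := fun i => max (x i) 0
  set q : ι → ℝ := fun i => max (-x i) 0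
  have hsub : ∀ i, p i - q i = x i := fun i => max_zero_sub_max_neg_zero_eq_self (x i)
  have hadd : ∀ i, p i + q i = |x i| := fun i => max_zero_add_max_neg_zero_eq_abs_self (x i)
  have hpq : ∑ i, p i = ∑ i, q i := by
    rw [← sub_eq_zero, ← sum_sub_distrib, ← hx]
    simp only [hsub]
  have hp_half : ∑ i, p i = (∑ i, |x i|) / 2 := by
    simp only [← hadd, sum_add_distrib, ← hpq]
    ring
  have hxv : ∑ i, x i • v i = ∑ i, p i • v i - ∑ i, q i • v i := by
    simp only [← hsub, sub_smul, sum_sub_distrib]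
  rw [hxv, ← hp_half]
  exact norm_sum_smul_sub_sum_smul_le (fun i => le_max_right _ _) (fun i => le_max_right _ _)
    hpq v hD

end Transport

theorem Finset.sup'_const_sub {ι α : Type*} [AddCommGroup α] [LinearOrder α]
    [IsOrderedAddMonoid α] {s : Finset ι} (H : s.Nonempty) (c : α) (f : ι → α) :
    s.sup' H (fun i => c - f i) = c - s.inf' H f := by
  obtain ⟨i, hi, hfi⟩ := s.exists_mem_eq_inf' H f
  refine le_antisymm (sup'_le H _ fun j hj => sub_le_sub_left (inf'_le f hj) c) ?_
  rw [hfi]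
  exact le_sup' (fun i => c - f i) hi

section Tau

variable {n : ℕ}

theorem lpNorm_one_eq_sum_abs (x : Fin n → ℝ) : lpNorm 1 x = ∑ i, |x i| := by
  simp only [lpNorm, WithLp.equiv_symm_apply, PiLp.norm_eq_of_L1, Real.norm_eq_abs]

theorem tau_nonneg (p : ℝ≥0∞) [Fact (1 ≤ p)] (B : Matrix (Fin n) (Fin n) ℝ) : 0 ≤ tau p B :=
  Real.sSup_nonneg fun _ ⟨_, _, _, hx⟩ => hx ▸ norm_nonneg (E := PiLp p fun _ : Fin n => ℝ) _

theorem lpNorm_one_transpose_mulVec_le {B : Matrix (Fin n) (Fin n) ℝ} {D : ℝ}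
    (hD : ∀ i j, ∑ k, |B i k - B j k| ≤ D) {x : Fin n → ℝ} (hx : ∑ i, x i = 0) :
    lpNorm 1 (Bᵀ *ᵥ x) ≤ lpNorm 1 x / 2 * D := by
  have hrows : lpNorm 1 (Bᵀ *ᵥ x) =
      ‖∑ i, x i • (WithLp.toLp 1 (B i) : PiLp 1 fun _ : Fin n => ℝ)‖ := by
    rw [Matrix.mulVec_transpose, Matrix.vecMul_eq_sum, lpNorm, WithLp.equiv_symm_apply,
      WithLp.toLp_sum]
    simp only [WithLp.toLp_smul]
  rw [hrows, lpNorm_one_eq_sum_abs]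
  refine norm_sum_smul_le_of_sum_eq_zero hx _ fun i j => ?_
  simpa only [← WithLp.toLp_sub, PiLp.norm_eq_of_L1, Real.norm_eq_abs, Pi.sub_apply] using hD i j

theorem tau_one_le {B : Matrix (Fin n) (Fin n) ℝ} {D : ℝ}
    (hD : ∀ i j, ∑ k, |B i k - B j k| ≤ D) (hD0 : 0 ≤ D) : tau 1 B ≤ D / 2 := by
  refine Real.sSup_le ?_ (by positivity)
  rintro _ ⟨x, hx, hx1, rfl⟩
  have := lpNorm_one_transpose_mulVec_le hD hx
  rw [hx1] at this
  linarith

theorem half_sum_abs_sub_le_tau_one (B : Matrix (Fin n) (Fin n) ℝ) {i j : Fin n} (hij : i ≠ j) :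
    (∑ k, |B i k - B j k|) / 2 ≤ tau 1 B := by
  set x : Fin n → ℝ := Pi.single i (1 / 2) - Pi.single j (1 / 2)
  have hx : ∑ k, x k = 0 := by simp [x, sum_sub_distrib]
  have hx1 : lpNorm 1 x = 1 := by
    rw [lpNorm_one_eq_sum_abs, Fintype.sum_eq_add i j hij fun k hk => by simp [x, hk.1, hk.2]]
    simp [x, hij, hij.symm]
    norm_num
  have hBx : lpNorm 1 (Bᵀ *ᵥ x) = (∑ k, |B i k - B j k|) / 2 := by
    rw [lpNorm_one_eq_sum_abs, sum_div]
    refine sum_congr rfl fun k _ => ?_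
    rw [Matrix.mulVec_transpose, Matrix.sub_vecMul, Matrix.single_vecMul, Matrix.single_vecMul]
    simp only [Pi.sub_apply, Pi.smul_apply, Matrix.row_apply, smul_eq_mul, ← mul_sub, abs_mul]
    norm_num
    ring
  have hbdd : BddAbove {t | ∃ x : Fin n → ℝ, ∑ i, x i = 0 ∧ lpNorm 1 x = 1 ∧
      t = lpNorm 1 (Bᵀ *ᵥ x)} := by
    let d : Fin n × Fin n → ℝ := fun ab => ∑ k, |B ab.1 k - B ab.2 k|
    refine ⟨univ.sup' ⟨(i, j), mem_univ _⟩ d / 2, ?_⟩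
    rintro _ ⟨y, hy, hy1, rfl⟩
    have := lpNorm_one_transpose_mulVec_le (D := univ.sup' ⟨(i, j), mem_univ _⟩ d)
      (fun a b => le_sup' d (mem_univ (a, b))) hy
    rw [hy1] at this
    linarith
  exact le_csSup hbdd ⟨x, hx, hx1, hBx.symm⟩

theorem tau_one_eq_half_sup' (B : Matrix (Fin n) (Fin n) ℝ)
    (H : (univ : Finset (Fin n × Fin n)).Nonempty) :
    tau 1 B = 1 / 2 * univ.sup' H fun ij => ∑ k, |B ij.1 k - B ij.2 k| := by
  set d : Fin n × Fin n → ℝ := fun ij => ∑ k, |B ij.1 k - B ij.2 k|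
  obtain ⟨⟨i, j⟩, -, hij⟩ := univ.exists_mem_eq_sup' H d
  have hd0 : 0 ≤ d (i, j) := sum_nonneg fun k _ => abs_nonneg _
  refine le_antisymm ?_ ?_
  · have := tau_one_le (fun a b => le_sup' d (mem_univ (a, b))) (hij ▸ hd0)
    linarith
  rw [hij]
  by_cases hij' : i = j
  · simpa [d, hij'] using tau_nonneg 1 B
  · have := half_sum_abs_sub_le_tau_one B hij'
    linarith

end Tau

theorem Finset.sum_abs_sub_eq_sum_add_sum_sub_two_mul_sum_min {ι : Type*} (s : Finset ι)
    (f g : ι → ℝ) :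
    ∑ k ∈ s, |f k - g k| = ∑ k ∈ s, f k + ∑ k ∈ s, g k - 2 * ∑ k ∈ s, min (f k) (g k) := by
  rw [← sum_add_distrib, mul_sum, ← sum_sub_distrib]
  refine sum_congr rfl fun k _ => ?_
  linarith [max_sub_min_eq_abs' (f k) (g k), min_add_max (f k) (g k)]

/-- explicit formula for `τ_1` of a constant row-sum matrix `B` with
`B e = λ_t e`. -/
theorem stmt17 {n : ℕ} (hn : 0 < n) (B : Matrix (Fin n) (Fin n) ℝ)
    (lamt : ℝ) (hB : B *ᵥ (1 : Fin n → ℝ) = lamt • (1 : Fin n → ℝ)) :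
    tau 1 B = (1 / 2) *
        Finset.univ.sup' ⟨((⟨0, hn⟩ : Fin n), (⟨0, hn⟩ : Fin n)), Finset.mem_univ _⟩
          (fun ij : Fin n × Fin n => ∑ k, |B ij.1 k - B ij.2 k|) ∧
      tau 1 B = lamt -
        Finset.univ.inf' ⟨((⟨0, hn⟩ : Fin n), (⟨0, hn⟩ : Fin n)), Finset.mem_univ _⟩
          (fun ij : Fin n × Fin n => ∑ k, min (B ij.1 k) (B ij.2 k)) := by
  have hrow : ∀ i, ∑ k, B i k = lamt := fun i => by
    simpa [Matrix.mulVec, dotProduct] using congrFun hB i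
  set H : (univ : Finset (Fin n × Fin n)).Nonempty := ⟨(⟨0, hn⟩, ⟨0, hn⟩), mem_univ _⟩
  refine ⟨tau_one_eq_half_sup' B H, ?_⟩
  rw [tau_one_eq_half_sup' B H, apply_sup'_eq_sup'_comp H _ fun a b => mul_max_of_nonneg a b
    (by norm_num : (0 : ℝ) ≤ 1 / 2),
    ← sup'_const_sub H lamt fun ij : Fin n × Fin n => ∑ k, min (B ij.1 k) (B ij.2 k)]
  refine sup'_congr H rfl fun ij _ => ?_
  simp only [Function.comp_apply, sum_abs_sub_eq_sum_add_sum_sub_two_mul_sum_min, hrow]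
  ring
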